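/- arXiv:2408.16409 — 3 statements merged into one kernel-verified Lean document; each statement's English description precedes it below -/
import Mathlib

section
/- There exists a constant D > 0, depending only on the masses, such that for all configurations q with q_i ≠ q_j for i ≠ j in the index set, √J · U ≥ D, where J = Σ_i m_i |q_i − L|² (all L_i equal to a common point L) and U = Σ_{i<j} m_i m_j / |q_i − q_j|. In fact one may take D = M^{-1/2} Σ_{i<j} m_i^{3/2} m_j^{3/2}, where M = Σ m_i. -/
/-!
For each pair `i < j`, the triangle inequality through `L` and the identity
`(a + b)(a x² + b y²) - a b (x + y)² = (a x - b y)²` give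
`mᵢ mⱼ |qᵢ - qⱼ|² ≤ (mᵢ + mⱼ)(mᵢ |qᵢ - L|² + mⱼ |qⱼ - L|²) ≤ M J`.
Taking square roots, `M^{-1/2} mᵢ^{3/2} mⱼ^{3/2} ≤ √J · mᵢ mⱼ / |qᵢ - qⱼ|`,
and summing over pairs gives the bound.
-/

open Finset

theorem mul_mul_norm_sub_sq_le {E : Type*} [SeminormedAddCommGroup E] {a b : ℝ}
    (ha : 0 ≤ a) (hb : 0 ≤ b) (x y : E) :
    a * b * ‖x - y‖ ^ 2 ≤ (a + b) * (a * ‖x‖ ^ 2 + b * ‖y‖ ^ 2) := by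
  have htri : ‖x - y‖ ≤ ‖x‖ + ‖y‖ := norm_sub_le x y
  calc a * b * ‖x - y‖ ^ 2 ≤ a * b * (‖x‖ + ‖y‖) ^ 2 := by gcongr
    _ ≤ (a + b) * (a * ‖x‖ ^ 2 + b * ‖y‖ ^ 2) := by
      nlinarith [sq_nonneg (a * ‖x‖ - b * ‖y‖)]

theorem mul_mul_norm_sub_sq_le_sum_mul_sum {ι E : Type*} [Fintype ι]
    [SeminormedAddCommGroup E]
    {m : ι → ℝ} (hm : ∀ i, 0 ≤ m i) (q : ι → E) (L : E) {i j : ι} (hij : i ≠ j) :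
    m i * m j * ‖q i - q j‖ ^ 2 ≤ (∑ l, m l) * ∑ l, m l * ‖q l - L‖ ^ 2 := by
  have hpair {f : ι → ℝ} (hf : ∀ l, 0 ≤ f l) : f i + f j ≤ ∑ l, f l := by
    classical
    rw [← sum_pair hij]
    exact sum_le_sum_of_subset_of_nonneg (subset_univ _) fun l _ _ => hf l
  calc m i * m j * ‖q i - q j‖ ^ 2 = m i * m j * ‖(q i - L) - (q j - L)‖ ^ 2 := by
        rw [sub_sub_sub_cancel_right]
    _ ≤ (m i + m j) * (m i * ‖q i - L‖ ^ 2 + m j * ‖q j - L‖ ^ 2) :=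
        mul_mul_norm_sub_sq_le (hm i) (hm j) _ _
    _ ≤ (∑ l, m l) * ∑ l, m l * ‖q l - L‖ ^ 2 := by
        have hJ l : 0 ≤ m l * ‖q l - L‖ ^ 2 := mul_nonneg (hm l) (sq_nonneg _)
        exact mul_le_mul (hpair hm) (hpair (f := fun l => m l * ‖q l - L‖ ^ 2) hJ)
          (add_nonneg (hJ i) (hJ j)) (sum_nonneg fun l _ => hm l)

theorem rpow_neg_half_mul_le_sqrt_mul_div {M J a b r : ℝ} (hM : 0 < M) (ha : 0 < a)
    (hb : 0 < b) (hr : 0 < r) (h : a * b * r ^ 2 ≤ M * J) :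
    M ^ (-(1 : ℝ) / 2) * (a ^ ((3 : ℝ) / 2) * b ^ ((3 : ℝ) / 2)) ≤
      Real.sqrt J * (a * b / r) := by
  have hab : 0 < a * b := mul_pos ha hb
  have hsqrt : Real.sqrt (a * b) * r ≤ Real.sqrt J * Real.sqrt M := by
    rw [← Real.sqrt_sq hr.le, ← Real.sqrt_mul hab.le, ← Real.sqrt_mul' _ hM.le, mul_comm J]
    exact Real.sqrt_le_sqrt h
  have hM' : M ^ (-(1 : ℝ) / 2) = (Real.sqrt M)⁻¹ := by
    rw [Real.sqrt_eq_rpow, ← Real.rpow_neg hM.le, neg_div]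
  have h32 : a ^ ((3 : ℝ) / 2) * b ^ ((3 : ℝ) / 2) = a * b * Real.sqrt (a * b) := by
    rw [← Real.mul_rpow ha.le hb.le, Real.sqrt_eq_rpow,
      ← Real.rpow_one_add' hab.le (by norm_num)]
    norm_num
  have hsM : 0 < Real.sqrt M := Real.sqrt_pos.mpr hM
  calc M ^ (-(1 : ℝ) / 2) * (a ^ ((3 : ℝ) / 2) * b ^ ((3 : ℝ) / 2))
      = a * b * (Real.sqrt (a * b) / Real.sqrt M) := by rw [hM', h32]; ring
    _ ≤ a * b * (Real.sqrt J / r) :=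
      mul_le_mul_of_nonneg_left ((div_le_div_iff₀ hsM hr).mpr hsqrt) hab.le
    _ = Real.sqrt J * (a * b / r) := by ring

theorem sum_sum_filter_lt_pos {ι : Type*} [Fintype ι] [LinearOrder ι] [Nontrivial ι]
    {f : ι → ι → ℝ} (hf : ∀ i j, i < j → 0 < f i j) :
    0 < ∑ i, ∑ j ∈ univ.filter (fun j => i < j), f i j := by
  obtain ⟨i₀, j₀, hlt⟩ := exists_pair_lt ι
  have hinner (i : ι) : 0 ≤ ∑ j ∈ univ.filter (fun j => i < j), f i j :=
    sum_nonneg fun j hj => (hf i j (mem_filter.mp hj).2).le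
  refine sum_pos' (fun i _ => hinner i) ⟨i₀, mem_univ _, ?_⟩
  exact sum_pos' (fun j hj => (hf i₀ j (mem_filter.mp hj).2).le)
    ⟨j₀, mem_filter.mpr ⟨mem_univ _, hlt⟩, hf i₀ j₀ hlt⟩

/-- `√J · U ≥ D` with the explicit positive constant
`D = M^{-1/2} ∑_{i<j} mᵢ^{3/2} mⱼ^{3/2}`. -/
theorem sqrtJ_mul_U_ge (k d : ℕ) (hk : 2 ≤ k) (m : Fin k → ℝ) (hm : ∀ i, 0 < m i)
    (L : EuclideanSpace ℝ (Fin d)) (q : Fin k → EuclideanSpace ℝ (Fin d))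
    (hq : ∀ i j, i ≠ j → q i ≠ q j) :
    0 < (∑ i, m i) ^ (-(1 : ℝ) / 2) *
        ∑ i, ∑ j ∈ Finset.univ.filter (fun j => i < j),
          m i ^ ((3 : ℝ) / 2) * m j ^ ((3 : ℝ) / 2) ∧
    (∑ i, m i) ^ (-(1 : ℝ) / 2) *
        (∑ i, ∑ j ∈ Finset.univ.filter (fun j => i < j),
          m i ^ ((3 : ℝ) / 2) * m j ^ ((3 : ℝ) / 2)) ≤
      Real.sqrt (∑ i, m i * ‖q i - L‖ ^ 2) *
        ∑ i, ∑ j ∈ Finset.univ.filter (fun j => i < j), m i * m j / ‖q i - q j‖ := by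
  have : Nontrivial (Fin k) := Fin.nontrivial_iff_two_le.mpr hk
  have hM : 0 < ∑ i, m i := sum_pos (fun i _ => hm i) univ_nonempty
  refine ⟨mul_pos (Real.rpow_pos_of_pos hM _)
    (sum_sum_filter_lt_pos fun i j _ => mul_pos (Real.rpow_pos_of_pos (hm i) _)
      (Real.rpow_pos_of_pos (hm j) _)), ?_⟩
  simp only [mul_sum]
  refine sum_le_sum fun i _ => sum_le_sum fun j hj => ?_
  have hij : i ≠ j := (mem_filter.mp hj).2.ne
  exact rpow_neg_half_mul_le_sqrt_mul_div hM (hm i) (hm j)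
    (norm_pos_iff.mpr (sub_ne_zero.mpr (hq i j hij)))
    (mul_mul_norm_sub_sq_le_sum_mul_sum (fun l => (hm l).le) q L hij)
end

section
/- Tauberian theorem (Wintner/Boas): let F : (t₀, T] → (0,∞) be C², suppose there is a continuous increasing function g : (0,∞) → (0,∞) with |F''(t)| ≤ g(|F'(t)|)/(t − t₀) for all t ∈ (t₀,T], and suppose F(t)/(t − t₀) → ν₀ as t → t₀⁺ for some real ν₀. Then F'(t) → ν₀ as t → t₀⁺. -/
/-!
By the mean value theorem `F'` is close to `ν₀` at some `ξ` between `t₀ + (t - t₀)/ρ` and `t`,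
because the slope of `F` over that interval is a fixed combination of two values of
`F(t)/(t - t₀)`. As long as `F'` stays within `ε` of `ν₀`, the hypothesis on `F''` reads
`|F''(u)| ≤ C/(u - t₀)`, so between `ξ` and `t` the derivative `F'` drifts by at most
`C log ρ`; a barrier argument turns this a priori bound into a proof, and `C log ρ = ε/2`
then gives `|F'(t) - ν₀| < ε`.
-/

open Set Filter Topology Real

-- `Icc 0 R` because the bound on `F''` also evaluates `g 0` (a junk value) where `F'` vanishes.
theorem MonotoneOn.exists_pos_forall_Icc_lt {g : ℝ → ℝ} (hg : MonotoneOn g (Ioi 0)) (R : ℝ) :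
    ∃ C > 0, ∀ x ∈ Icc 0 R, g x < C := by
  refine ⟨max (max (g 0) (g R)) 0 + 1, by positivity, fun x hx => ?_⟩
  have hgx : g x ≤ max (g 0) (g R) := by
    rcases hx.1.eq_or_lt with rfl | hx0
    · exact le_max_left _ _
    · exact (hg hx0 (hx0.trans_le hx.2) hx.2).trans (le_max_right _ _)
  linarith [le_max_left (max (g 0) (g R)) 0]

theorem tendsto_slope_of_tendsto_div_sub {F : ℝ → ℝ} {t₀ ν ρ : ℝ} (hρ0 : 0 < ρ) (hρ1 : ρ ≠ 1)
    (h : Tendsto (fun t => F t / (t - t₀)) (𝓝[>] t₀) (𝓝 ν)) :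
    Tendsto (fun t => slope F (t₀ + (t - t₀) / ρ) t) (𝓝[>] t₀) (𝓝 ν) := by
  have hshift : Tendsto (fun t => t₀ + (t - t₀) / ρ) (𝓝[>] t₀) (𝓝[>] t₀) := by
    refine tendsto_nhdsWithin_of_tendsto_nhds_of_eventually_within _ ?_ ?_
    · have : Continuous (fun t => t₀ + (t - t₀) / ρ) := by fun_prop
      simpa using this.tendsto' t₀ _ (by ring) |>.mono_left nhdsWithin_le_nhds
    · filter_upwards [self_mem_nhdsWithin] with t (ht : t₀ < t)
      have : 0 < (t - t₀) / ρ := div_pos (sub_pos.2 ht) hρ0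
      exact lt_add_of_pos_right t₀ this
  have hρ : ρ - 1 ≠ 0 := sub_ne_zero.2 hρ1
  -- the slope is `(ρ q(t) - q(t₀ + (t - t₀)/ρ)) / (ρ - 1)` with `q(t) = F t / (t - t₀)`
  have hlim := ((h.const_mul ρ).sub (h.comp hshift)).div_const (ρ - 1)
  rw [show (ρ * ν - ν) / (ρ - 1) = ν by field_simp] at hlim
  refine hlim.congr' ?_
  filter_upwards [self_mem_nhdsWithin] with t (ht : t₀ < t)
  have hs : t - t₀ ≠ 0 := (sub_pos.2 ht).ne'
  simp only [Function.comp_apply]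
  rw [slope_def_field, show t₀ + (t - t₀) / ρ - t₀ = (t - t₀) / ρ by ring,
    show t - (t₀ + (t - t₀) / ρ) = (ρ - 1) * (t - t₀) / ρ by field_simp; ring]
  field_simp

theorem abs_le_add_mul_log_of_abs_deriv_lt {f f' : ℝ → ℝ} {t₀ a b r C : ℝ}
    (ha : t₀ < a) (hab : a ≤ b) (hC : 0 ≤ C)
    (hf : ∀ u ∈ Icc a b, HasDerivAt f (f' u) u) (hfa : |f a| ≤ r)
    (hf' : ∀ u ∈ Ico a b, |f u| ≤ r + C * log ((b - t₀) / (a - t₀)) → |f' u| < C / (u - t₀)) :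
    |f b| ≤ r + C * log ((b - t₀) / (a - t₀)) := by
  have hpos : ∀ u ∈ Icc a b, 0 < u - t₀ := fun u hu => by linarith [hu.1]
  have hB : ∀ u ∈ Icc a b,
      HasDerivAt (fun u => r + C * log ((u - t₀) / (a - t₀))) (C / (u - t₀)) u := by
    intro u hu
    have h := (((hasDerivAt_id' u).sub_const t₀).div_const (a - t₀)).log
      (div_pos (hpos u hu) (sub_pos.2 ha)).ne' |>.const_mul C |>.const_add r
    refine h.congr_deriv ?_
    have := (hpos u hu).ne'
    have := (sub_pos.2 ha).ne'
    field_simp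
  refine image_norm_le_of_norm_deriv_right_lt_deriv_boundary'
    (fun u hu => (hf u hu).continuousAt.continuousWithinAt)
    (fun u hu => (hf u (Ico_subset_Icc_self hu)).hasDerivWithinAt) ?_
    (fun u hu => (hB u hu).continuousAt.continuousWithinAt)
    (fun u hu => (hB u (Ico_subset_Icc_self hu)).hasDerivWithinAt) ?_ ⟨hab, le_rfl⟩
  · simpa [div_self (sub_pos.2 ha).ne'] using hfa
  · intro u hu hfu
    refine hf' u hu (le_of_eq_of_le hfu ?_)
    have hu := Ico_subset_Icc_self hu
    have := div_pos (hpos u hu) (sub_pos.2 ha)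
    gcongr
    exact hu.2

theorem abs_sub_lt_of_abs_deriv_le_div {F' F'' g : ℝ → ℝ} {t₀ ξ t ν ε C : ℝ}
    (hξ : t₀ < ξ) (hξt : ξ ≤ t) (hC : 0 ≤ C)
    (hF'' : ∀ u ∈ Icc ξ t, HasDerivAt F' (F'' u) u)
    (hbound : ∀ u ∈ Icc ξ t, |F'' u| ≤ g |F' u| / (u - t₀))
    (hgC : ∀ x ∈ Icc 0 (|ν| + ε), g x < C)
    (hsmall : |F' ξ - ν| + C * log ((t - t₀) / (ξ - t₀)) < ε) :
    |F' t - ν| < ε := by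
  refine lt_of_le_of_lt (abs_le_add_mul_log_of_abs_deriv_lt (f := fun u => F' u - ν) hξ hξt hC
    (fun u hu => (hF'' u hu).sub_const ν) le_rfl fun u hu hFu => ?_) hsmall
  have hu := Ico_subset_Icc_self hu
  have hupos : 0 < u - t₀ := by linarith [hu.1]
  have hFu' : |F' u| ≤ |ν| + ε := by
    linarith [abs_sub_abs_le_abs_sub (F' u) ν]
  calc |F'' u| ≤ g |F' u| / (u - t₀) := hbound u hu
    _ < C / (u - t₀) := by gcongr; exact hgC _ ⟨abs_nonneg _, hFu'⟩

theorem abs_deriv_sub_lt_of_abs_slope_sub_lt {F F' F'' g : ℝ → ℝ} {t₀ t ν ε C ρ : ℝ}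
    (ht : t₀ < t) (hρ : 1 < ρ) (hC : 0 ≤ C) (hCρ : C * log ρ ≤ ε / 2)
    (hF' : ∀ u ∈ Ioc t₀ t, HasDerivAt F (F' u) u)
    (hF'' : ∀ u ∈ Ioc t₀ t, HasDerivAt F' (F'' u) u)
    (hbound : ∀ u ∈ Ioc t₀ t, |F'' u| ≤ g |F' u| / (u - t₀))
    (hgC : ∀ x ∈ Icc 0 (|ν| + ε), g x < C)
    (hslope : |slope F (t₀ + (t - t₀) / ρ) t - ν| < ε / 2) :
    |F' t - ν| < ε := by
  set a := t₀ + (t - t₀) / ρ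
  have hs : 0 < t - t₀ := sub_pos.2 ht
  have ha : t₀ < a := lt_add_of_pos_right t₀ (div_pos hs (zero_lt_one.trans hρ))
  have hat : a < t := by
    have : (t - t₀) / ρ < t - t₀ := div_lt_self hs hρ
    simp only [a]; linarith
  obtain ⟨ξ, hξ, hξslope⟩ := exists_hasDerivAt_eq_slope F F' hat
    (fun u hu => (hF' u ⟨ha.trans_le hu.1, hu.2⟩).continuousAt.continuousWithinAt)
    (fun u hu => hF' u ⟨ha.trans hu.1, hu.2.le⟩)
  have hξ₀ : t₀ < ξ := ha.trans hξ.1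
  have hlog : C * log ((t - t₀) / (ξ - t₀)) ≤ ε / 2 := by
    have hratio : (t - t₀) / (ξ - t₀) ≤ ρ := by
      rw [div_le_iff₀ (sub_pos.2 hξ₀), ← div_le_iff₀' (zero_lt_one.trans hρ)]
      simp only [a] at hξ; linarith [hξ.1]
    calc C * log ((t - t₀) / (ξ - t₀)) ≤ C * log ρ := by gcongr
      _ ≤ ε / 2 := hCρ
  have hsub : Icc ξ t ⊆ Ioc t₀ t := fun u hu => ⟨hξ₀.trans_le hu.1, hu.2⟩
  refine abs_sub_lt_of_abs_deriv_le_div hξ₀ hξ.2.le hC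
    (fun u hu => hF'' u (hsub hu)) (fun u hu => hbound u (hsub hu)) hgC ?_
  rw [hξslope, ← slope_def_field]
  linarith

theorem tauberian_wintner_boas_general (t₀ T ν₀ : ℝ) (hT : t₀ < T)
    (F F' F'' g : ℝ → ℝ)
    (hF' : ∀ t ∈ Ioc t₀ T, HasDerivAt F (F' t) t)
    (hF'' : ∀ t ∈ Ioc t₀ T, HasDerivAt F' (F'' t) t)
    (hgmono : MonotoneOn g (Ioi 0))
    (hbound : ∀ t ∈ Ioc t₀ T, |F'' t| ≤ g |F' t| / (t - t₀))
    (hlim : Tendsto (fun t => F t / (t - t₀)) (nhdsWithin t₀ (Ioi t₀)) (nhds ν₀)) :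
    Tendsto F' (nhdsWithin t₀ (Ioi t₀)) (nhds ν₀) := by
  rw [Metric.tendsto_nhds]
  intro ε hε
  obtain ⟨C, hC, hgC⟩ := hgmono.exists_pos_forall_Icc_lt (|ν₀| + ε)
  set ρ := exp (ε / (2 * C))
  have hρ : 1 < ρ := one_lt_exp_iff.2 (by positivity)
  have hCρ : C * log ρ = ε / 2 := by rw [log_exp]; field_simp
  have hslope := tendsto_slope_of_tendsto_div_sub (zero_lt_one.trans hρ) hρ.ne' hlim
  filter_upwards [Ioc_mem_nhdsGT hT, Metric.tendsto_nhds.1 hslope (ε / 2) (half_pos hε)]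
    with t ht hνslope
  have hsub : Ioc t₀ t ⊆ Ioc t₀ T := Ioc_subset_Ioc_right ht.2
  rw [Real.dist_eq] at hνslope ⊢
  exact abs_deriv_sub_lt_of_abs_slope_sub_lt ht.1 hρ hC.le hCρ.le (fun u hu => hF' u (hsub hu))
    (fun u hu => hF'' u (hsub hu)) (fun u hu => hbound u (hsub hu)) hgC hνslope

/-- Tauberian theorem of Wintner/Boas: if `F : (t₀,T] → (0,∞)` is C²,
`|F''(t)| ≤ g(|F'(t)|)/(t−t₀)` for a continuous increasing `g : (0,∞) → (0,∞)`,
and `F(t)/(t−t₀) → ν₀` as `t → t₀⁺`, then `F'(t) → ν₀` as `t → t₀⁺`. -/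
theorem tauberian_wintner_boas (t₀ T ν₀ : ℝ) (hT : t₀ < T)
    (F F' F'' g : ℝ → ℝ)
    (hFpos : ∀ t ∈ Ioc t₀ T, 0 < F t)
    (hF' : ∀ t ∈ Ioc t₀ T, HasDerivAt F (F' t) t)
    (hF'' : ∀ t ∈ Ioc t₀ T, HasDerivAt F' (F'' t) t)
    (hF'cont : ContinuousOn F' (Ioc t₀ T))
    (hF''cont : ContinuousOn F'' (Ioc t₀ T))
    (hgcont : ContinuousOn g (Ioi 0))
    (hgmono : MonotoneOn g (Ioi 0))
    (hgpos : ∀ u ∈ Ioi (0 : ℝ), 0 < g u)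
    (hbound : ∀ t ∈ Ioc t₀ T, |F'' t| ≤ g |F' t| / (t - t₀))
    (hlim : Tendsto (fun t => F t / (t - t₀)) (nhdsWithin t₀ (Ioi t₀)) (nhds ν₀)) :
    Tendsto F' (nhdsWithin t₀ (Ioi t₀)) (nhds ν₀) :=
  tauberian_wintner_boas_general t₀ T ν₀ hT F F' F'' g hF' hF'' hgmono hbound hlim
end

section
/- Suppose J : [t₀, T) → (0,∞) is C¹ with J̇(t) < 0, J(t) → 0 as t → T⁻, and J̇(t)/J(t)^{1/4} → −√b as t → T⁻ for some b > 0. Then J(t)/(T−t)^{4/3} → A and J̇(t)/(T−t)^{1/3} → −(4/3)A as t → T⁻, where A = (3√b/4)^{4/3}. -/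
/-!
For `0 < p ≤ 1` (here `p = 3/4`), `(f ^ p)' = p f' / f ^ (1 - p) → p L`, and both `f ^ p` and
`T - t` vanish at `T`, so L'Hôpital's rule gives `f ^ p / (T - t) → -p L`. Raising this to the
power `1 / p` gives `f / (T - t) ^ (1 / p) → (-p L) ^ (1 / p)`, and the factorisation
`f' / (T - t) ^ (1 / p - 1) = (f' / f ^ (1 - p)) * (f / (T - t) ^ (1 / p)) ^ (1 - p)` gives the
rate of `f'`.
-/

open Set Filter Topology

section PowerLawVanishing

variable {f f' : ℝ → ℝ} {a T p L : ℝ}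

theorem tendsto_rpow_div_sub_nhdsLT_of_tendsto_deriv_div_rpow (hp : 0 < p) (haT : a < T)
    (hpos : ∀ t ∈ Ioo a T, 0 < f t) (hderiv : ∀ t ∈ Ioo a T, HasDerivAt f (f' t) t)
    (hlim : Tendsto f (𝓝[<] T) (𝓝 0))
    (hL : Tendsto (fun t => f' t / f t ^ (1 - p)) (𝓝[<] T) (𝓝 L)) :
    Tendsto (fun t => f t ^ p / (T - t)) (𝓝[<] T) (𝓝 (-p * L)) := by
  refine HasDerivAt.lhopital_zero_left_on_Ioo haT
    (f' := fun t => f' t * p * f t ^ (p - 1)) (g' := fun _ => -1)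
    (fun t ht => (hderiv t ht).rpow_const (Or.inl (hpos t ht).ne'))
    (fun t _ => by simpa using (hasDerivAt_id t).const_sub T) (fun _ _ => by norm_num) ?_ ?_ ?_
  · simpa [Function.comp_def, Real.zero_rpow hp.ne'] using
      ((Real.continuousAt_rpow_const 0 p (Or.inr hp.le)).tendsto.comp hlim)
  · simpa using ((continuous_sub_left T).tendsto T).mono_left nhdsWithin_le_nhds
  · refine (hL.const_mul (-p)).congr' ?_
    filter_upwards [Ioo_mem_nhdsLT haT] with t ht
    rw [show p - 1 = -(1 - p) by ring, Real.rpow_neg (hpos t ht).le]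
    field_simp

theorem rpow_div_rpow_inv {x y p : ℝ} (hx : 0 ≤ x) (hy : 0 ≤ y) (hp : p ≠ 0) :
    (x ^ p / y) ^ p⁻¹ = x / y ^ p⁻¹ := by
  rw [Real.div_rpow (Real.rpow_nonneg hx p) hy, Real.rpow_rpow_inv hx hp]

theorem tendsto_div_sub_rpow_nhdsLT_of_tendsto_deriv_div_rpow (hp : 0 < p) (haT : a < T)
    (hpos : ∀ t ∈ Ioo a T, 0 < f t) (hderiv : ∀ t ∈ Ioo a T, HasDerivAt f (f' t) t)
    (hlim : Tendsto f (𝓝[<] T) (𝓝 0))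
    (hL : Tendsto (fun t => f' t / f t ^ (1 - p)) (𝓝[<] T) (𝓝 L)) :
    Tendsto (fun t => f t / (T - t) ^ p⁻¹) (𝓝[<] T) (𝓝 ((-p * L) ^ p⁻¹)) := by
  refine ((tendsto_rpow_div_sub_nhdsLT_of_tendsto_deriv_div_rpow hp haT hpos hderiv hlim
    hL).rpow_const (Or.inr (inv_pos.2 hp).le)).congr' ?_
  filter_upwards [Ioo_mem_nhdsLT haT] with t ht
  exact rpow_div_rpow_inv (hpos t ht).le (sub_pos.2 ht.2).le hp.ne'

theorem tendsto_deriv_div_sub_rpow_nhdsLT_of_tendsto_deriv_div_rpow (hp : 0 < p) (hp1 : p ≤ 1)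
    (haT : a < T) (hpos : ∀ t ∈ Ioo a T, 0 < f t) (hderiv : ∀ t ∈ Ioo a T, HasDerivAt f (f' t) t)
    (hlim : Tendsto f (𝓝[<] T) (𝓝 0))
    (hL : Tendsto (fun t => f' t / f t ^ (1 - p)) (𝓝[<] T) (𝓝 L)) :
    Tendsto (fun t => f' t / (T - t) ^ (p⁻¹ - 1)) (𝓝[<] T) (𝓝 (L * (-p * L) ^ (p⁻¹ - 1))) := by
  have hnonneg : 0 ≤ -p * L := by
    refine ge_of_tendsto
      (tendsto_rpow_div_sub_nhdsLT_of_tendsto_deriv_div_rpow hp haT hpos hderiv hlim hL) ?_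
    filter_upwards [Ioo_mem_nhdsLT haT] with t ht
    exact div_nonneg (Real.rpow_nonneg (hpos t ht).le p) (sub_pos.2 ht.2).le
  have hexp : p⁻¹ * (1 - p) = p⁻¹ - 1 := by field_simp
  have hprod := hL.mul ((tendsto_div_sub_rpow_nhdsLT_of_tendsto_deriv_div_rpow hp haT hpos hderiv
    hlim hL).rpow_const (p := 1 - p) (Or.inr (sub_nonneg.2 hp1)))
  rw [← Real.rpow_mul hnonneg, hexp] at hprod
  refine hprod.congr' ?_
  filter_upwards [Ioo_mem_nhdsLT haT] with t ht
  have hft := hpos t ht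
  have hTt := sub_pos.2 ht.2
  rw [Real.div_rpow hft.le (Real.rpow_nonneg hTt.le _), ← Real.rpow_mul hTt.le, hexp]
  field_simp

end PowerLawVanishing

theorem asymptotics_from_Q_limit_general (t₀ T b : ℝ) (hT : t₀ < T)
    (J J' : ℝ → ℝ)
    (hJpos : ∀ t ∈ Ico t₀ T, 0 < J t)
    (hJ' : ∀ t ∈ Ico t₀ T, HasDerivAt J (J' t) t)
    (hJlim : Tendsto J (nhdsWithin T (Iio T)) (nhds 0))
    (hQ : Tendsto (fun t => J' t / (J t) ^ ((1 : ℝ) / 4)) (nhdsWithin T (Iio T))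
      (nhds (-Real.sqrt b))) :
    Tendsto (fun t => J t / (T - t) ^ ((4 : ℝ) / 3)) (nhdsWithin T (Iio T))
        (nhds ((3 * Real.sqrt b / 4) ^ ((4 : ℝ) / 3))) ∧
      Tendsto (fun t => J' t / (T - t) ^ ((1 : ℝ) / 3)) (nhdsWithin T (Iio T))
        (nhds (-(4 / 3 * (3 * Real.sqrt b / 4) ^ ((4 : ℝ) / 3)))) := by
  have hpos : ∀ t ∈ Ioo t₀ T, 0 < J t := fun t ht => hJpos t (Ioo_subset_Ico_self ht)
  have hderiv : ∀ t ∈ Ioo t₀ T, HasDerivAt J (J' t) t := fun t ht => hJ' t (Ioo_subset_Ico_self ht)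
  have hL : Tendsto (fun t => J' t / J t ^ (1 - 3 / 4 : ℝ)) (𝓝[<] T) (𝓝 (-Real.sqrt b)) := by
    norm_num [hQ]
  have hc : -(3 / 4 : ℝ) * -Real.sqrt b = 3 * Real.sqrt b / 4 := by ring
  have hinv : (3 / 4 : ℝ)⁻¹ = 4 / 3 := by norm_num
  have hinv_sub : (3 / 4 : ℝ)⁻¹ - 1 = 1 / 3 := by norm_num
  have hval : -Real.sqrt b * (3 * Real.sqrt b / 4) ^ ((1 : ℝ) / 3) =
      -(4 / 3 * (3 * Real.sqrt b / 4) ^ ((4 : ℝ) / 3)) := by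
    rw [show (4 : ℝ) / 3 = 1 / 3 + 1 by norm_num, Real.rpow_add_one' (by positivity) (by norm_num)]
    ring
  have hJ_rate := tendsto_div_sub_rpow_nhdsLT_of_tendsto_deriv_div_rpow (by norm_num) hT hpos
    hderiv hJlim hL
  have hderiv_rate := tendsto_deriv_div_sub_rpow_nhdsLT_of_tendsto_deriv_div_rpow (by norm_num)
    (by norm_num) hT hpos hderiv hJlim hL
  rw [hc, hinv] at hJ_rate
  rw [hc, hinv_sub, hval] at hderiv_rate
  exact ⟨hJ_rate, hderiv_rate⟩

/-- if `J̇ < 0`, `J → 0` at `T⁻` and `J̇/J^{1/4} → −√b` with `b > 0`, then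
`J(t)/(T−t)^{4/3} → A` and `J̇(t)/(T−t)^{1/3} → −(4/3)A`, where `A = (3√b/4)^{4/3}`. -/
theorem asymptotics_from_Q_limit (t₀ T b : ℝ) (hT : t₀ < T) (hb : 0 < b)
    (J J' : ℝ → ℝ)
    (hJpos : ∀ t ∈ Ico t₀ T, 0 < J t)
    (hJ' : ∀ t ∈ Ico t₀ T, HasDerivAt J (J' t) t)
    (hJ'cont : ContinuousOn J' (Ico t₀ T))
    (hJ'neg : ∀ t ∈ Ico t₀ T, J' t < 0)
    (hJlim : Tendsto J (nhdsWithin T (Iio T)) (nhds 0))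
    (hQ : Tendsto (fun t => J' t / (J t) ^ ((1 : ℝ) / 4)) (nhdsWithin T (Iio T))
      (nhds (-Real.sqrt b))) :
    Tendsto (fun t => J t / (T - t) ^ ((4 : ℝ) / 3)) (nhdsWithin T (Iio T))
        (nhds ((3 * Real.sqrt b / 4) ^ ((4 : ℝ) / 3))) ∧
      Tendsto (fun t => J' t / (T - t) ^ ((1 : ℝ) / 3)) (nhdsWithin T (Iio T))
        (nhds (-(4 / 3 * (3 * Real.sqrt b / 4) ^ ((4 : ℝ) / 3)))) :=
  asymptotics_from_Q_limit_general t₀ T b hT J J' hJpos hJ' hJlim hQ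
end
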